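/- arXiv:1604.01104 — 2 statements merged into one kernel-verified Lean document; each statement's English description precedes it below -/
import Mathlib

section
/- The polynomials P_l^n defined by the recursion P_0^n = 1, P_1^n(x) = x, P_2^n(x) = x² - n, P_l^n(x) = x P_{l-1}^n(x) - (n-1) P_{l-2}^n(x) for l ≥ 3 satisfy the closed form P_l^n(x) = (n-1)^{l/2} [ U_l(x / (2√(n-1))) - (1/(n-1)) U_{l-2}(x / (2√(n-1))) ] for l ≥ 2, where U_l are the Chebyshev polynomials of the second kind and U_{-2} = U_{-1} = 0. -/
open Polynomial

/-- The polynomials `P_l^n`: `P_0 = 1`, `P_1 = x`, `P_2 = x² - n`,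
`P_l = x P_{l-1} - (n-1) P_{l-2}` for `l ≥ 3`. -/
noncomputable def modCheb (n : ℝ) : ℕ → Polynomial ℝ
  | 0 => 1
  | 1 => X
  | 2 => X ^ 2 - C n
  | l + 3 => X * modCheb n (l + 2) - C (n - 1) * modCheb n (l + 1)

lemma modCheb_aux (n : ℝ) (hpos : (0:ℝ) < n - 1) (l : ℕ) (x : ℝ) :
    (modCheb n (l+2)).eval x
      = Real.sqrt (n-1) ^ (l+2) *
          ((Polynomial.Chebyshev.U ℝ ((l:ℤ)+2)).eval (x / (2 * Real.sqrt (n-1)))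
            - (1/(n-1)) * (Polynomial.Chebyshev.U ℝ (l:ℤ)).eval
                (x / (2 * Real.sqrt (n-1)))) := by
  set s := Real.sqrt (n-1) with hs
  have hs2 : s ^ 2 = n - 1 := Real.sq_sqrt hpos.le
  have hs0 : s ≠ 0 := by
    intro h; rw [h] at hs2; simp at hs2; linarith
  have hneq : n = s ^ 2 + 1 := by linarith
  induction l using Nat.strong_induction_on with
  | _ l ih =>
    match l with
    | 0 =>
      simp only [modCheb, Nat.cast_zero, zero_add, Polynomial.Chebyshev.U_two,
        Polynomial.Chebyshev.U_zero]
      simp only [eval_sub, eval_pow, eval_X, eval_C, eval_mul, eval_one,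
        eval_ofNat]
      rw [hneq]
      field_simp
      ring
    | 1 =>
      show (X * modCheb n 2 - C (n-1) * modCheb n 1).eval x = _
      have h3 : ((1:ℕ):ℤ) + 2 = 3 := by norm_num
      rw [h3]
      have hU3 : Polynomial.Chebyshev.U ℝ 3 = 2 * X * (4 * X ^ 2 - 1) - 2 * X := by
        have := Polynomial.Chebyshev.U_add_two ℝ 1
        norm_num at this
        rw [this, Polynomial.Chebyshev.U_two]
      rw [hU3]
      simp only [modCheb, Nat.cast_one, Polynomial.Chebyshev.U_one]
      simp only [eval_sub, eval_pow, eval_X, eval_C, eval_mul, eval_one,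
        eval_ofNat]
      rw [hneq]
      field_simp
      ring
    | (m+2) =>
      have ih1 := ih (m+1) (by omega)
      have ih0 := ih m (by omega)
      show (X * modCheb n (m+3) - C (n-1) * modCheb n (m+2)).eval x = _
      have hU : ∀ k : ℤ, (Polynomial.Chebyshev.U ℝ (k+2)).eval (x / (2*s))
          = 2*(x/(2*s))*(Polynomial.Chebyshev.U ℝ (k+1)).eval (x / (2*s))
            - (Polynomial.Chebyshev.U ℝ k).eval (x / (2*s)) := by
        intro k
        rw [Polynomial.Chebyshev.U_add_two]
        simp
      rw [eval_sub, eval_mul, eval_mul, eval_X, eval_C, ih1, ih0]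
      simp only [show ((m+1:ℕ):ℤ) = (m:ℤ)+1 from by push_cast; ring,
        show ((m+2:ℕ):ℤ) = (m:ℤ)+2 from by push_cast; ring]
      rw [hU ((m:ℤ)+2), show ((m:ℤ)+2+1) = ((m:ℤ)+1)+2 from by ring]
      have hx : x = 2 * s * (x / (2*s)) := by field_simp
      rw [hneq]
      rw [hU (m:ℤ)]
      nth_rewrite 1 [hx]
      field_simp
      ring


/-- **Closed form for `P_l^n` via Chebyshev polynomials of the second kind:**
for `l ≥ 2` and `n > 1`,
`P_l^n(x) = (n-1)^{l/2} [ U_l(x/(2√(n-1))) - (n-1)⁻¹ U_{l-2}(x/(2√(n-1))) ]`. -/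
theorem modCheb_eq_chebyshevU (n : ℕ) (hn : 1 < n) (l : ℕ) (hl : 2 ≤ l)
    (x : ℝ) :
    (modCheb (n : ℝ) l).eval x
      = Real.sqrt ((n : ℝ) - 1) ^ l *
          ((Polynomial.Chebyshev.U ℝ (l : ℤ)).eval
              (x / (2 * Real.sqrt ((n : ℝ) - 1)))
            - (1 / ((n : ℝ) - 1)) *
              (Polynomial.Chebyshev.U ℝ ((l : ℤ) - 2)).eval
                (x / (2 * Real.sqrt ((n : ℝ) - 1)))) := by
  obtain ⟨k, rfl⟩ : ∃ k, l = k + 2 := ⟨l - 2, by omega⟩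
  have hpos : (0:ℝ) < (n:ℝ) - 1 := by
    have : (2:ℕ) ≤ n := hn
    have : (2:ℝ) ≤ (n:ℝ) := by exact_mod_cast this
    linarith
  have := modCheb_aux (n:ℝ) hpos k x
  have e1 : ((k+2:ℕ):ℤ) = (k:ℤ)+2 := by push_cast; ring
  have e2 : ((k+2:ℕ):ℤ) - 2 = (k:ℤ) := by push_cast; ring
  rw [e2, e1, this]
end

section
/- With P_l^n defined by the recursion P_0^n = 1, P_1^n(x) = x, P_2^n(x) = x² - n, P_l^n(x) = x P_{l-1}^n(x) - (n-1) P_{l-2}^n(x) (l ≥ 3), the inversion formula U_l(x/(2√(n-1))) = (n-1)^{-l/2} ∑_{k=0}^{⌊l/2⌋} P_{l-2k}^n(x) holds for all l ≥ 0. -/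
open Polynomial

noncomputable def modS (n : ℝ) : ℕ → Polynomial ℝ
  | 0 => 1
  | 1 => X
  | l + 2 => modCheb n (l + 2) + modS n l

lemma lemA (n : ℝ) : ∀ l, X * modS n (l+1) = modS n (l+2) + C (n-1) * modS n l := by
  have H : ∀ l, (X * modS n (l+1) = modS n (l+2) + C (n-1) * modS n l) ∧
      (X * modS n (l+2) = modS n (l+3) + C (n-1) * modS n (l+1)) := by
    intro l
    induction l with
    | zero =>
      constructor
      · show X * X = (X^2 - C n + 1) + C (n-1) * 1
        simp [map_sub, C_1]; ring
      · show X * (X^2 - C n + 1) = ((X * (X^2 - C n) - C (n-1) * X) + X) + C (n-1) * X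
        ring
    | succ m ih =>
      refine ⟨ih.2, ?_⟩
      show X * (modCheb n (m+3) + modS n (m+1))
        = ((X * modCheb n (m+3) - C (n-1) * modCheb n (m+2)) + modS n (m+2))
          + C (n-1) * (modCheb n (m+2) + modS n m)
      have h1 := ih.1
      linear_combination h1
  exact fun l => (H l).1

lemma lemB (n : ℝ) (l : ℕ) : modS n (l+2) = X * modS n (l+1) - C (n-1) * modS n l := by
  linear_combination -lemA n l

lemma sum_eq (n : ℝ) (x : ℝ) : ∀ l,
    ∑ k ∈ Finset.range (l / 2 + 1), (modCheb n (l - 2 * k)).eval x = (modS n l).eval x := by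
  have H : ∀ l,
      (∑ k ∈ Finset.range (l / 2 + 1), (modCheb n (l - 2 * k)).eval x = (modS n l).eval x) ∧
      (∑ k ∈ Finset.range ((l+1) / 2 + 1), (modCheb n (l + 1 - 2 * k)).eval x
        = (modS n (l+1)).eval x) := by
    intro l
    induction l with
    | zero => simp [modS, modCheb]
    | succ m ih =>
      refine ⟨ih.2, ?_⟩
      have hdiv : (m + 2) / 2 + 1 = (m / 2 + 1) + 1 := by omega
      rw [hdiv, Finset.sum_range_succ']
      have : ∀ k, m + 2 - 2 * (k + 1) = m - 2 * k := by omega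
      simp only [this, Nat.sub_zero, mul_zero]
      rw [ih.1]
      show (modS n m).eval x + (modCheb n (m+2)).eval x = (modS n (m+2)).eval x
      show _ = (modCheb n (m+2) + modS n m).eval x
      rw [eval_add]; ring
  exact fun l => (H l).1

/-- **Inversion formula:** for `n > 1` and all `l ≥ 0`,
`U_l(x/(2√(n-1))) = (n-1)^{-l/2} ∑_{k=0}^{⌊l/2⌋} P_{l-2k}^n(x)`. -/
theorem chebyshevU_eq_sum_modCheb (n : ℕ) (hn : 1 < n) (l : ℕ) (x : ℝ) :
    (Polynomial.Chebyshev.U ℝ (l : ℤ)).eval (x / (2 * Real.sqrt ((n : ℝ) - 1)))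
      = (Real.sqrt ((n : ℝ) - 1) ^ l)⁻¹ *
          ∑ k ∈ Finset.range (l / 2 + 1), (modCheb (n : ℝ) (l - 2 * k)).eval x := by
  set s := Real.sqrt ((n : ℝ) - 1) with hsdef
  have hpos : (0:ℝ) < (n:ℝ) - 1 := by
    have : (1:ℝ) < n := by exact_mod_cast hn
    linarith
  have hs2 : s ^ 2 = (n:ℝ) - 1 := Real.sq_sqrt hpos.le
  have hs0 : s ≠ 0 := by positivity
  have key : ∀ l : ℕ,
      s ^ l * (Polynomial.Chebyshev.U ℝ (l : ℤ)).eval (x / (2 * s)) = (modS (n:ℝ) l).eval x := by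
    have H : ∀ m : ℕ,
        (s ^ m * (Polynomial.Chebyshev.U ℝ (m : ℤ)).eval (x / (2 * s)) = (modS (n:ℝ) m).eval x) ∧
        (s ^ (m+1) * (Polynomial.Chebyshev.U ℝ ((m:ℤ)+1)).eval (x / (2 * s))
          = (modS (n:ℝ) (m+1)).eval x) := by
      intro m
      induction m with
      | zero =>
        constructor
        · simp [modS, Polynomial.Chebyshev.U_zero]
        · simp only [Nat.cast_zero, zero_add, pow_one, Polynomial.Chebyshev.U_one]
          show s * (2 * X : Polynomial ℝ).eval (x / (2*s)) = (modS (n:ℝ) 1).eval x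
          simp only [modS, eval_mul, eval_ofNat, eval_X]
          field_simp
      | succ m ih =>
        refine ⟨ih.2, ?_⟩
        have hU : Polynomial.Chebyshev.U ℝ ((m:ℤ)+1+1)
            = 2 * X * Polynomial.Chebyshev.U ℝ ((m:ℤ)+1) - Polynomial.Chebyshev.U ℝ (m:ℤ) := by
          have := Polynomial.Chebyshev.U_add_two ℝ (m:ℤ)
          convert this using 2 <;> ring
        have hcast : ((m+1:ℕ):ℤ)+1 = (m:ℤ)+1+1 := by push_cast; ring
        rw [hcast, hU]
        rw [lemB]
        simp only [eval_mul, eval_sub, eval_X, eval_C, eval_ofNat]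
        have h1 := ih.1
        have h2 := ih.2
        have : s ^ (m+1+1) * (2 * (x / (2*s)) * (Polynomial.Chebyshev.U ℝ ((m:ℤ)+1)).eval (x/(2*s))
            - (Polynomial.Chebyshev.U ℝ (m:ℤ)).eval (x/(2*s)))
            = x * (s ^ (m+1) * (Polynomial.Chebyshev.U ℝ ((m:ℤ)+1)).eval (x/(2*s)))
              - ((n:ℝ)-1) * (s ^ m * (Polynomial.Chebyshev.U ℝ (m:ℤ)).eval (x/(2*s))) := by
          rw [← hs2]
          field_simp
          ring
        rw [this, h1, h2]
    exact fun l => (H l).1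
  rw [sum_eq, ← key l]
  field_simp
end
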